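/- Let n ≥ 2 and let A ∈ ℝ^{n×n} be a symmetric matrix with an orthonormal basis of eigenvectors v¹, v², …, vⁿ and corresponding eigenvalues λ₁ < λ₂ ≤ … ≤ λₙ (so A vⁱ = λᵢ vⁱ). If v¹ ∈ ℝⁿ₊ and c ∉ [λ₂, λₙ), then the sub-level set [φ_A ≤ c] = {x ∈ ℝⁿ₊₊ : φ_A(x) ≤ c} is a convex subset of ℝⁿ, where φ_A(x) = ⟨Ax, x⟩/‖x‖². -/

import Mathlib

open scoped InnerProductSpace

/-- Multiplication of an `n × n` real matrix with a vector of `EuclideanSpace ℝ (Fin n)`. -/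
noncomputable def mulVecE {n : ℕ} (A : Matrix (Fin n) (Fin n) ℝ)
    (x : EuclideanSpace ℝ (Fin n)) : EuclideanSpace ℝ (Fin n) :=
  WithLp.toLp 2 (fun i => ∑ j, A i j * x j)

/-- Core convexity inequality for the "ice-cream cone" defined by a quadratic form with
at most one negative weight. -/
lemma aux_cone_ineq {m : ℕ} (s : Finset (Fin m)) (i0 : Fin m)
    (w α β : Fin m → ℝ) (hw : ∀ i ∈ s, 0 ≤ w i)
    (hα0 : 0 ≤ α i0) (hβ0 : 0 ≤ β i0) (a b : ℝ) (ha : 0 ≤ a) (hb : 0 ≤ b)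
    (hx : w i0 * α i0 ^ 2 + ∑ i ∈ s, w i * α i ^ 2 ≤ 0)
    (hy : w i0 * β i0 ^ 2 + ∑ i ∈ s, w i * β i ^ 2 ≤ 0) :
    w i0 * (a * α i0 + b * β i0) ^ 2 + ∑ i ∈ s, w i * (a * α i + b * β i) ^ 2 ≤ 0 := by
  set Sx := ∑ i ∈ s, w i * α i ^ 2 with hSx
  set Sy := ∑ i ∈ s, w i * β i ^ 2 with hSy
  set Bs := ∑ i ∈ s, w i * α i * β i with hBs
  have hSx0 : 0 ≤ Sx := Finset.sum_nonneg fun i hi => mul_nonneg (hw i hi) (sq_nonneg _)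
  have hSy0 : 0 ≤ Sy := Finset.sum_nonneg fun i hi => mul_nonneg (hw i hi) (sq_nonneg _)
  have hCS := Finset.sum_mul_sq_le_sq_mul_sq s (fun i => Real.sqrt (w i) * α i)
    (fun i => Real.sqrt (w i) * β i)
  have e1 : ∑ i ∈ s, (Real.sqrt (w i) * α i) * (Real.sqrt (w i) * β i) = Bs := by
    rw [hBs]
    refine Finset.sum_congr rfl fun i hi => ?_
    rw [show (Real.sqrt (w i) * α i) * (Real.sqrt (w i) * β i)
        = (Real.sqrt (w i) * Real.sqrt (w i)) * (α i * β i) by ring,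
      Real.mul_self_sqrt (hw i hi)]
    ring
  have e2 : ∑ i ∈ s, (Real.sqrt (w i) * α i) ^ 2 = Sx := by
    rw [hSx]
    exact Finset.sum_congr rfl fun i hi => by rw [mul_pow, Real.sq_sqrt (hw i hi)]
  have e3 : ∑ i ∈ s, (Real.sqrt (w i) * β i) ^ 2 = Sy := by
    rw [hSy]
    exact Finset.sum_congr rfl fun i hi => by rw [mul_pow, Real.sq_sqrt (hw i hi)]
  rw [e1, e2, e3] at hCS
  have hSxle : Sx ≤ -(w i0) * α i0 ^ 2 := by linarith
  have hSyle : Sy ≤ -(w i0) * β i0 ^ 2 := by linarith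
  set t : ℝ := -(w i0) * (α i0 * β i0) with ht
  have ht0 : 0 ≤ t := by
    rcases le_or_gt (w i0) 0 with h | h
    · exact mul_nonneg (by linarith) (mul_nonneg hα0 hβ0)
    · have hz2 : α i0 ^ 2 ≤ 0 := by nlinarith
      have hz : α i0 = 0 := by
        have := sq_nonneg (α i0)
        have h0 : α i0 ^ 2 = 0 := le_antisymm hz2 this
        exact pow_eq_zero_iff (by norm_num) |>.mp h0
      rw [ht, hz]; simp
  have hB2 : Bs ^ 2 ≤ t ^ 2 := by
    calc Bs ^ 2 ≤ Sx * Sy := hCS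
      _ ≤ (-(w i0) * α i0 ^ 2) * (-(w i0) * β i0 ^ 2) :=
          mul_le_mul hSxle hSyle hSy0 (le_trans hSx0 hSxle)
      _ = t ^ 2 := by rw [ht]; ring
  have hB : Bs ≤ t := by nlinarith [hB2, ht0, sq_nonneg (Bs - t), sq_nonneg (Bs + t)]
  have e4 : ∑ i ∈ s, w i * (a * α i + b * β i) ^ 2
      = a ^ 2 * Sx + 2 * a * b * Bs + b ^ 2 * Sy := by
    rw [hSx, hSy, hBs, Finset.mul_sum, Finset.mul_sum, Finset.mul_sum,
      ← Finset.sum_add_distrib, ← Finset.sum_add_distrib]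
    exact Finset.sum_congr rfl fun i _ => by ring
  rw [e4]
  have h1 : 0 ≤ a ^ 2 * (-(w i0) * α i0 ^ 2 - Sx) := mul_nonneg (sq_nonneg a) (by linarith)
  have h2 : 0 ≤ b ^ 2 * (-(w i0) * β i0 ^ 2 - Sy) := mul_nonneg (sq_nonneg b) (by linarith)
  have h3 : 0 ≤ (2 * a * b) * (-w i0 * (α i0 * β i0) - Bs) :=
    mul_nonneg (by positivity) (by rw [ht] at hB; linarith)
  nlinarith [h1, h2, h3]

/-- Let `A` be a symmetric `n × n` matrix (`n ≥ 2`) with an orthonormal basis of eigenvectors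
`v⁰, …, vⁿ⁻¹` and corresponding eigenvalues `μ₀ < μ₁ ≤ … ≤ μₙ₋₁`.  If `v⁰ ∈ ℝⁿ₊` and
`c ∉ [μ₁, μₙ₋₁)`, then the sub-level set `{x ∈ ℝⁿ₊₊ : φ_A(x) ≤ c}` of the Rayleigh quotient
`φ_A(x) = ⟪Ax, x⟫ / ‖x‖²` is convex. -/
theorem rayleigh_sublevel_convex {n : ℕ} (hn : 2 ≤ n)
    (A : Matrix (Fin n) (Fin n) ℝ) (hA : A.IsSymm)
    (v : Fin n → EuclideanSpace ℝ (Fin n)) (hv : Orthonormal ℝ v)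
    (μ : Fin n → ℝ) (heig : ∀ i, mulVecE A (v i) = μ i • v i)
    (hmono : Monotone μ) (h01 : μ ⟨0, by omega⟩ < μ ⟨1, by omega⟩)
    (hv0 : ∀ i, 0 ≤ v ⟨0, by omega⟩ i)
    (c : ℝ) (hc : c ∉ Set.Ico (μ ⟨1, by omega⟩) (μ ⟨n - 1, by omega⟩)) :
    Convex ℝ {x : EuclideanSpace ℝ (Fin n) |
      (∀ i, 0 < x i) ∧ ⟪mulVecE A x, x⟫_ℝ / ‖x‖ ^ 2 ≤ c} := by
  have hn0 : 0 < n := by omega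
  set i0 : Fin n := ⟨0, by omega⟩ with hi0def
  set i1 : Fin n := ⟨1, by omega⟩ with hi1def
  set iN : Fin n := ⟨n - 1, by omega⟩ with hiNdef
  haveI : Nonempty (Fin n) := ⟨i0⟩
  have card_eq : Fintype.card (Fin n) = Module.finrank ℝ (EuclideanSpace ℝ (Fin n)) := by
    simp
  let b : OrthonormalBasis (Fin n) ℝ (EuclideanSpace ℝ (Fin n)) :=
    (basisOfOrthonormalOfCardEqFinrank hv card_eq).toOrthonormalBasis
      (by rwa [coe_basisOfOrthonormalOfCardEqFinrank])
  have hb : ⇑b = v := by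
    simp only [b, Module.Basis.coe_toOrthonormalBasis, coe_basisOfOrthonormalOfCardEqFinrank]
  -- symmetry of the quadratic form
  have hsym : ∀ x y : EuclideanSpace ℝ (Fin n),
      ⟪mulVecE A x, y⟫_ℝ = ⟪x, mulVecE A y⟫_ℝ := by
    intro x y
    simp only [mulVecE, PiLp.inner_apply, PiLp.toLp_apply, RCLike.inner_apply, conj_trivial,
      Finset.sum_mul, Finset.mul_sum]
    rw [Finset.sum_comm]
    refine Finset.sum_congr rfl fun i _ => Finset.sum_congr rfl fun j _ => ?_
    rw [← hA.apply i j]; ring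
  have hAv : ∀ (x : EuclideanSpace ℝ (Fin n)) (i),
      ⟪mulVecE A x, v i⟫_ℝ = μ i * ⟪x, v i⟫_ℝ := by
    intro x i
    rw [hsym, heig, real_inner_smul_right]
  have hQ : ∀ x : EuclideanSpace ℝ (Fin n),
      ⟪mulVecE A x, x⟫_ℝ = ∑ i, μ i * ⟪x, v i⟫_ℝ ^ 2 := by
    intro x
    have h := b.sum_inner_mul_inner (mulVecE A x) x
    rw [hb] at h
    rw [← h]
    refine Finset.sum_congr rfl fun i _ => ?_
    rw [hAv, real_inner_comm (v i) x]; ring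
  have hN : ∀ x : EuclideanSpace ℝ (Fin n), ‖x‖ ^ 2 = ∑ i, ⟪x, v i⟫_ℝ ^ 2 := by
    intro x
    have h := b.sum_inner_mul_inner x x
    rw [hb] at h
    rw [← real_inner_self_eq_norm_sq, ← h]
    refine Finset.sum_congr rfl fun i _ => ?_
    rw [real_inner_comm x (v i)]; ring
  have hxpos : ∀ x : EuclideanSpace ℝ (Fin n), (∀ i, 0 < x i) → 0 < ‖x‖ ^ 2 := by
    intro x hx
    have hx0 : x ≠ 0 := by
      intro h
      have := hx i0
      rw [h] at this
      simp at this
    exact pow_pos (norm_pos_iff.mpr hx0) 2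
  have hmem : ∀ x : EuclideanSpace ℝ (Fin n), (∀ i, 0 < x i) →
      (⟪mulVecE A x, x⟫_ℝ / ‖x‖ ^ 2 ≤ c ↔ ∑ i, (μ i - c) * ⟪x, v i⟫_ℝ ^ 2 ≤ 0) := by
    intro x hx
    have h1 : ∑ i, (μ i - c) * ⟪x, v i⟫_ℝ ^ 2
        = (∑ i, μ i * ⟪x, v i⟫_ℝ ^ 2) - c * ∑ i, ⟪x, v i⟫_ℝ ^ 2 := by
      rw [Finset.mul_sum, ← Finset.sum_sub_distrib]
      exact Finset.sum_congr rfl fun i _ => by ring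
    rw [div_le_iff₀ (hxpos x hx), hQ, hN, h1]
    constructor <;> intro h <;> linarith
  have hinn0 : ∀ x : EuclideanSpace ℝ (Fin n), (∀ i, 0 < x i) → 0 ≤ ⟪x, v i0⟫_ℝ := by
    intro x hx
    simp only [PiLp.inner_apply, RCLike.inner_apply, conj_trivial]
    exact Finset.sum_nonneg fun i _ => mul_nonneg (hv0 i) (le_of_lt (hx i))
  intro x hx y hy a bb ha hbb hab
  simp only [Set.mem_setOf_eq] at hx hy ⊢
  obtain ⟨hx1, hx2⟩ := hx
  obtain ⟨hy1, hy2⟩ := hy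
  have hz1 : ∀ i, 0 < (a • x + bb • y) i := by
    intro i
    have h1 := hx1 i; have h2 := hy1 i
    have he : (a • x + bb • y) i = a * x i + bb * y i := rfl
    rw [he]
    rcases eq_or_lt_of_le ha with h | h
    · have hb1 : bb = 1 := by linarith
      rw [← h, hb1]; simpa using h2
    · nlinarith
  refine ⟨hz1, ?_⟩
  rw [hmem _ hz1]
  rw [hmem _ hx1] at hx2
  rw [hmem _ hy1] at hy2
  have hlin : ∀ i, ⟪a • x + bb • y, v i⟫_ℝ = a * ⟪x, v i⟫_ℝ + bb * ⟪y, v i⟫_ℝ := by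
    intro i
    rw [inner_add_left, real_inner_smul_left, real_inner_smul_left]
  rw [Set.mem_Ico, not_and_or, not_le, not_lt] at hc
  rcases hc with hlt | hge
  · -- c < μ i1 : Cauchy–Schwarz / cone case
    set s : Finset (Fin n) := Finset.univ.erase i0 with hs
    have hw : ∀ i ∈ s, 0 ≤ μ i - c := by
      intro i hi
      have hne : i ≠ i0 := (Finset.mem_erase.mp hi).1
      have h1 : (1 : ℕ) ≤ i.val := by
        rcases Nat.eq_zero_or_pos i.val with h | h
        · exact absurd (Fin.ext h) hne
        · omega
      have : μ i1 ≤ μ i := hmono (by simpa [hi1def, Fin.le_def] using h1)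
      linarith
    have split : ∀ f : Fin n → ℝ, ∑ i, f i = f i0 + ∑ i ∈ s, f i := by
      intro f
      exact (Finset.add_sum_erase Finset.univ f (Finset.mem_univ i0)).symm
    rw [split] at hx2 hy2 ⊢
    simp only [hlin]
    exact aux_cone_ineq s i0 (fun i => μ i - c) (fun i => ⟪x, v i⟫_ℝ) (fun i => ⟪y, v i⟫_ℝ)
      hw (hinn0 x hx1) (hinn0 y hy1) a bb ha hbb hx2 hy2
  · -- μ iN ≤ c : all weights nonpositive
    refine Finset.sum_nonpos fun i _ => ?_
    have hiN : i ≤ iN := by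
      rw [hiNdef, Fin.le_def]
      have := i.isLt
      simpa using by omega
    have hμi : μ i ≤ c := le_trans (hmono hiN) hge
    exact mul_nonpos_of_nonpos_of_nonneg (by linarith) (sq_nonneg _)
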